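/- Let d, n ∈ ℕ with n ≥ 1, σ > 0, ε ≥ 0, R ≥ 0. Let μ be a probability measure on ℝᵈ, let y ∈ ℝⁿ, let m : ℝᵈ → ℝⁿ be measurable, and let C : ℝᵈ → (n×n real matrices) be measurable such that, for μ-almost every ψ, C(ψ) is symmetric positive semidefinite with tr(C(ψ)) ≤ n·ε, and ‖y − m(ψ)‖ ≤ R. Define p_D = ∫ (2π)^{−n/2} det(σ²Iₙ + C(ψ))^{−1/2} exp(−½ (y−m(ψ))ᵀ(σ²Iₙ + C(ψ))⁻¹(y−m(ψ))) dμ(ψ) and p̃_D = ∫ (2πσ²)^{−n/2} exp(−‖y−m(ψ)‖²/(2σ²)) dμ(ψ). Then |p_D − p̃_D| ≤ (2π)^{−n/2} σ^{−n} · (n·ε/(2σ²)) · (1 + R²/σ²). -/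

import Mathlib

open Matrix Real MeasureTheory

/-!
Diagonalize `C(ψ) = U diag(λ) Uᵀ` and put `w = Uᵀ (y - m ψ)`. In the eigenbasis the prefactor of
the mixed density is `σ⁻ⁿ ∏ σ / √(σ² + λᵢ)` and its exponent is `-½ ∑ wᵢ² / (σ² + λᵢ)`.
The Weierstrass product inequality `1 - ∏ bᵢ ≤ ∑ (1 - bᵢ)` for `bᵢ ∈ [0, 1]`, together with
`1 - σ / √(σ² + λ) ≤ λ / (2σ²)`, bounds the loss in the prefactor by `σ⁻ⁿ tr C / (2σ²)`.
Since `exp` is 1-Lipschitz on `(-∞, 0]`, the change of the exponential factor is at most half of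
`‖w‖² / σ² - ∑ wᵢ² / (σ² + λᵢ) ≤ ‖w‖² tr C / σ⁴`. The resulting pointwise bound is integrated
against the probability measure `μ`.
-/

theorem Finset.one_sub_prod_le_sum_one_sub {ι : Type*} (s : Finset ι) {b : ι → ℝ}
    (h0 : ∀ i ∈ s, 0 ≤ b i) (h1 : ∀ i ∈ s, b i ≤ 1) :
    1 - ∏ i ∈ s, b i ≤ ∑ i ∈ s, (1 - b i) := by
  induction s using Finset.cons_induction with
  | empty => simp
  | cons a s ha ih =>
    rw [Finset.forall_mem_cons] at h0 h1
    rw [prod_cons, sum_cons]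
    have hprod := Finset.prod_le_one h0.2 h1.2
    nlinarith [ih h0.2 h1.2, mul_le_mul_of_nonneg_right h1.1 (sub_nonneg.2 hprod)]

theorem one_sub_div_sqrt_sq_add_le {σ l : ℝ} (hσ : 0 < σ) (hl : 0 ≤ l) :
    1 - σ / √(σ ^ 2 + l) ≤ l / (2 * σ ^ 2) := by
  have hr : σ ≤ √(σ ^ 2 + l) := Real.le_sqrt_of_sq_le (by linarith)
  have hr2 : √(σ ^ 2 + l) ^ 2 = σ ^ 2 + l := Real.sq_sqrt (by positivity)
  rw [one_sub_div (by positivity), div_le_div_iff₀ (by positivity) (by positivity)]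
  nlinarith [mul_nonneg (sub_nonneg.2 hr) (sub_nonneg.2 hr)]

theorem div_sqrt_sq_add_le_one {σ l : ℝ} (hl : 0 ≤ l) : σ / √(σ ^ 2 + l) ≤ 1 :=
  div_le_one_of_le₀ (Real.le_sqrt_of_sq_le (by linarith)) (Real.sqrt_nonneg _)

section Prefactor

variable {ι : Type*} [Fintype ι] {σ : ℝ} {l : ι → ℝ}

theorem rpow_neg_half_prod_sq_add_eq (hσ : 0 < σ) (hl : ∀ i, 0 ≤ l i) :
    (∏ i, (σ ^ 2 + l i)) ^ (-(1 : ℝ) / 2) =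
      σ ^ (-(Fintype.card ι : ℝ)) * ∏ i, σ / √(σ ^ 2 + l i) := by
  have hc : ∀ i ∈ Finset.univ, 0 ≤ σ ^ 2 + l i := fun i _ => by have := hl i; positivity
  rw [neg_div, Real.rpow_neg (Finset.prod_nonneg hc), ← Real.sqrt_eq_rpow, Real.sqrt_prod _ hc,
    Real.rpow_neg hσ.le, Real.rpow_natCast, Finset.prod_div_distrib, Finset.prod_const,
    Finset.card_univ, div_eq_mul_inv, ← mul_assoc, inv_mul_cancel₀ (by positivity), one_mul]

theorem rpow_neg_half_prod_sq_add_le (hσ : 0 < σ) (hl : ∀ i, 0 ≤ l i) :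
    (∏ i, (σ ^ 2 + l i)) ^ (-(1 : ℝ) / 2) ≤ σ ^ (-(Fintype.card ι : ℝ)) := by
  rw [rpow_neg_half_prod_sq_add_eq hσ hl]
  exact mul_le_of_le_one_right (by positivity)
    (Finset.prod_le_one (fun i _ => by positivity) fun i _ => div_sqrt_sq_add_le_one (hl i))

theorem sub_rpow_neg_half_prod_sq_add_le (hσ : 0 < σ) (hl : ∀ i, 0 ≤ l i) :
    σ ^ (-(Fintype.card ι : ℝ)) - (∏ i, (σ ^ 2 + l i)) ^ (-(1 : ℝ) / 2) ≤
      σ ^ (-(Fintype.card ι : ℝ)) * ((∑ i, l i) / (2 * σ ^ 2)) := by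
  rw [rpow_neg_half_prod_sq_add_eq hσ hl, ← mul_one_sub, Finset.sum_div]
  gcongr
  calc 1 - ∏ i, σ / √(σ ^ 2 + l i) ≤ ∑ i, (1 - σ / √(σ ^ 2 + l i)) :=
        Finset.one_sub_prod_le_sum_one_sub _ (fun i _ => by positivity)
          fun i _ => div_sqrt_sq_add_le_one (hl i)
    _ ≤ ∑ i, l i / (2 * σ ^ 2) := by
        gcongr with i; exact one_sub_div_sqrt_sq_add_le hσ (hl i)

end Prefactor

theorem Real.exp_neg_sub_exp_neg_le {x y : ℝ} (hx : 0 ≤ x) (hxy : x ≤ y) :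
    exp (-x) - exp (-y) ≤ y - x := by
  have hexp : exp (-y) = exp (-x) * exp (-(y - x)) := by rw [← Real.exp_add]; ring_nf
  rw [hexp, ← mul_one_sub]
  calc exp (-x) * (1 - exp (-(y - x))) ≤ 1 * (y - x) :=
        mul_le_mul (Real.exp_le_one_iff.2 (by linarith))
          (by linarith [Real.one_sub_le_exp_neg (y - x)])
          (sub_nonneg.2 (Real.exp_le_one_iff.2 (by linarith))) zero_le_one
    _ = y - x := one_mul _

section QuadraticForm

variable {ι : Type*} [Fintype ι] {s : ℝ} {l : ι → ℝ}

theorem sum_inv_add_mul_sq_le (hs : 0 < s) (hl : ∀ i, 0 ≤ l i) (w : ι → ℝ) :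
    ∑ i, (s + l i)⁻¹ * w i ^ 2 ≤ (∑ i, w i ^ 2) / s := by
  rw [Finset.sum_div]
  gcongr with i
  rw [div_eq_inv_mul]
  gcongr
  linarith [hl i]

theorem sum_sq_div_sub_sum_inv_add_mul_sq_le (hs : 0 < s) (hl : ∀ i, 0 ≤ l i) (w : ι → ℝ) :
    (∑ i, w i ^ 2) / s - ∑ i, (s + l i)⁻¹ * w i ^ 2 ≤ (∑ i, w i ^ 2) * (∑ i, l i) / s ^ 2 := by
  rw [Finset.sum_div, ← Finset.sum_sub_distrib, Finset.sum_mul, Finset.sum_div]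
  gcongr with i
  have hli : l i ≤ ∑ j, l j := Finset.single_le_sum (fun j _ => hl j) (Finset.mem_univ i)
  have hsl : 0 < s + l i := by linarith [hl i]
  have hinv : s⁻¹ - (s + l i)⁻¹ ≤ (∑ j, l j) / s ^ 2 := by
    rw [inv_sub_inv hs.ne' hsl.ne', add_sub_cancel_left,
      div_le_div_iff₀ (by positivity) (by positivity)]
    nlinarith [mul_le_mul_of_nonneg_left hli (sq_nonneg s),
      mul_nonneg (mul_nonneg ((hl i).trans hli) hs.le) (hl i)]
  calc w i ^ 2 / s - (s + l i)⁻¹ * w i ^ 2 = w i ^ 2 * (s⁻¹ - (s + l i)⁻¹) := by ring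
    _ ≤ w i ^ 2 * ((∑ j, l j) / s ^ 2) := by gcongr
    _ = w i ^ 2 * (∑ j, l j) / s ^ 2 := by ring

end QuadraticForm

theorem abs_mul_sub_mul_le {P T e₁ e₂ : ℝ} (hP : 0 ≤ P) (hPT : P ≤ T) (he₂ : 0 ≤ e₂)
    (he : e₂ ≤ e₁) (he₁ : e₁ ≤ 1) : |P * e₁ - T * e₂| ≤ (T - P) + T * (e₁ - e₂) := by
  rw [abs_le]
  constructor <;> nlinarith [mul_nonneg (sub_nonneg.2 hPT) (sub_nonneg.2 he₁),
    mul_nonneg (sub_nonneg.2 hPT) he₂, mul_nonneg hP (sub_nonneg.2 he)]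

theorem abs_rpow_neg_half_prod_mul_exp_sub_le {ι : Type*} [Fintype ι] {σ : ℝ} (hσ : 0 < σ)
    {l : ι → ℝ} (hl : ∀ i, 0 ≤ l i) (w : ι → ℝ) :
    |(∏ i, (σ ^ 2 + l i)) ^ (-(1 : ℝ) / 2) * exp (-(1 / 2) * ∑ i, (σ ^ 2 + l i)⁻¹ * w i ^ 2) -
        σ ^ (-(Fintype.card ι : ℝ)) * exp (-(∑ i, w i ^ 2) / (2 * σ ^ 2))| ≤
      σ ^ (-(Fintype.card ι : ℝ)) * ((∑ i, l i) / (2 * σ ^ 2)) * (1 + (∑ i, w i ^ 2) / σ ^ 2) := by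
  set T := σ ^ (-(Fintype.card ι : ℝ))
  set S := ∑ i, w i ^ 2
  set q := ∑ i, (σ ^ 2 + l i)⁻¹ * w i ^ 2
  have hσ2 : 0 < σ ^ 2 := by positivity
  have hq0 : 0 ≤ q :=
    Finset.sum_nonneg fun i _ => mul_nonneg (inv_nonneg.2 (by linarith [hl i])) (sq_nonneg _)
  have hc : 0 < ∏ i, (σ ^ 2 + l i) := Finset.prod_pos fun i _ => by linarith [hl i]
  have hqS : q ≤ S / σ ^ 2 := sum_inv_add_mul_sq_le hσ2 hl w
  have hSq : S / σ ^ 2 - q ≤ S * (∑ i, l i) / (σ ^ 2) ^ 2 :=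
    sum_sq_div_sub_sum_inv_add_mul_sq_le hσ2 hl w
  have hexp : exp (-(1 / 2) * q) - exp (-S / (2 * σ ^ 2)) ≤ (S / σ ^ 2 - q) / 2 := by
    convert Real.exp_neg_sub_exp_neg_le (x := q / 2) (y := S / σ ^ 2 / 2) (by positivity)
      (by linarith) using 3 <;> ring
  calc _ ≤ (T - (∏ i, (σ ^ 2 + l i)) ^ (-(1 : ℝ) / 2)) +
        T * (exp (-(1 / 2) * q) - exp (-S / (2 * σ ^ 2))) := by
        refine abs_mul_sub_mul_le (Real.rpow_nonneg hc.le _) (rpow_neg_half_prod_sq_add_le hσ hl)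
          (Real.exp_pos _).le (Real.exp_le_exp.2 ?_) (Real.exp_le_one_iff.2 (by linarith))
        rw [neg_div, div_mul_eq_div_div_swap, neg_mul, one_div_mul_eq_div]
        linarith
    _ ≤ T * ((∑ i, l i) / (2 * σ ^ 2)) + T * (S * (∑ i, l i) / (σ ^ 2) ^ 2 / 2) := by
        gcongr
        · exact sub_rpow_neg_half_prod_sq_add_le hσ hl
        · linarith
    _ = T * ((∑ i, l i) / (2 * σ ^ 2)) * (1 + S / σ ^ 2) := by
        field_simp

section Spectral

variable {n : Type*} [Fintype n] [DecidableEq n]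

theorem dotProduct_mulVec_conj_diagonal {U : Matrix n n ℝ} (c v : n → ℝ) :
    v ⬝ᵥ ((U * diagonal c * star U) *ᵥ v) = ∑ i, c i * (star U *ᵥ v) i ^ 2 := by
  have hstar : star U = Uᵀ := by
    rw [star_eq_conjTranspose, conjTranspose_eq_transpose_of_trivial]
  rw [← mulVec_mulVec, ← mulVec_mulVec, dotProduct_mulVec, ← mulVec_transpose, ← hstar]
  simp only [dotProduct, mulVec_diagonal]
  exact Finset.sum_congr rfl fun i _ => by ring

theorem inv_conj_diagonal {U : Matrix n n ℝ} (hU : U ∈ unitaryGroup n ℝ) {c : n → ℝ}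
    (hc : ∀ i, c i ≠ 0) : (U * diagonal c * star U)⁻¹ = U * diagonal c⁻¹ * star U := by
  refine inv_eq_right_inv ?_
  simp only [Matrix.mul_assoc]
  rw [← Matrix.mul_assoc (star U), Unitary.star_mul_self_of_mem hU, Matrix.one_mul,
    ← Matrix.mul_assoc (diagonal c), diagonal_mul_diagonal]
  simp [mul_inv_cancel₀ (hc _), Unitary.mul_star_self_of_mem hU]

theorem det_conj_diagonal {U : Matrix n n ℝ} (hU : U ∈ unitaryGroup n ℝ) (c : n → ℝ) :
    (U * diagonal c * star U).det = ∏ i, c i := by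
  rw [det_mul_right_comm, Unitary.mul_star_self_of_mem hU, Matrix.one_mul, det_diagonal]

namespace Matrix.IsHermitian

variable {C : Matrix n n ℝ} (hC : C.IsHermitian)

theorem smul_one_add_eq_conj_diagonal (s : ℝ) :
    s • 1 + C = (hC.eigenvectorUnitary : Matrix n n ℝ) *
      diagonal (fun i => s + hC.eigenvalues i) * star (hC.eigenvectorUnitary : Matrix n n ℝ) := by
  set U : Matrix n n ℝ := (hC.eigenvectorUnitary : Matrix n n ℝ)
  have hU : U * star U = 1 := Unitary.coe_mul_star_self _
  have hs : s • (1 : Matrix n n ℝ) = U * diagonal (fun _ => s) * star U := by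
    rw [← smul_one_eq_diagonal, Matrix.mul_smul, Matrix.mul_one, Matrix.smul_mul, hU]
  conv_lhs => rw [hC.spectral_theorem, hs]
  simp [U, ← Matrix.add_mul, ← Matrix.mul_add, diagonal_add]

theorem det_smul_one_add (s : ℝ) : (s • 1 + C).det = ∏ i, (s + hC.eigenvalues i) := by
  rw [hC.smul_one_add_eq_conj_diagonal, det_conj_diagonal (SetLike.coe_mem _)]

theorem dotProduct_inv_smul_one_add_mulVec {s : ℝ} (hs : ∀ i, s + hC.eigenvalues i ≠ 0)
    (v : n → ℝ) : v ⬝ᵥ ((s • 1 + C)⁻¹ *ᵥ v) =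
      ∑ i, (s + hC.eigenvalues i)⁻¹ * (star (hC.eigenvectorUnitary : Matrix n n ℝ) *ᵥ v) i ^ 2 := by
  rw [hC.smul_one_add_eq_conj_diagonal, inv_conj_diagonal (SetLike.coe_mem _) hs,
    dotProduct_mulVec_conj_diagonal]
  rfl

end Matrix.IsHermitian

theorem dotProduct_self_eq_sum_sq_mulVec {U : Matrix n n ℝ} (hU : U ∈ unitaryGroup n ℝ)
    (v : n → ℝ) : v ⬝ᵥ v = ∑ i, (star U *ᵥ v) i ^ 2 := by
  simpa [Unitary.mul_star_self_of_mem hU] using dotProduct_mulVec_conj_diagonal (U := U) 1 v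

theorem Matrix.PosSemidef.abs_det_rpow_mul_exp_sub_le {σ : ℝ} (hσ : 0 < σ) {C : Matrix n n ℝ}
    (hC : C.PosSemidef) (v : n → ℝ) :
    |(σ ^ 2 • (1 : Matrix n n ℝ) + C).det ^ (-(1 : ℝ) / 2) *
          exp (-(1 / 2) * (v ⬝ᵥ ((σ ^ 2 • (1 : Matrix n n ℝ) + C)⁻¹ *ᵥ v))) -
        σ ^ (-(Fintype.card n : ℝ)) * exp (-(v ⬝ᵥ v) / (2 * σ ^ 2))| ≤
      σ ^ (-(Fintype.card n : ℝ)) * (C.trace / (2 * σ ^ 2)) * (1 + (v ⬝ᵥ v) / σ ^ 2) := by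
  have hH := hC.isHermitian
  have hl := hC.eigenvalues_nonneg
  have hs : ∀ i, σ ^ 2 + hH.eigenvalues i ≠ 0 := fun i => by have := hl i; positivity
  rw [hH.det_smul_one_add, hH.dotProduct_inv_smul_one_add_mulVec hs,
    dotProduct_self_eq_sum_sq_mulVec (SetLike.coe_mem hH.eigenvectorUnitary),
    hH.trace_eq_sum_eigenvalues]
  exact abs_rpow_neg_half_prod_mul_exp_sub_le hσ hl _

end Spectral

section Measurability

variable {α : Type*} [MeasurableSpace α] {n : Type*} [Fintype n] [DecidableEq n]
  {A : α → Matrix n n ℝ}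

theorem Matrix.measurable_det (hA : ∀ i j, Measurable fun x => A x i j) :
    Measurable fun x => (A x).det := by
  simp_rw [det_apply]
  fun_prop

theorem Matrix.measurable_inv_apply (hA : ∀ i j, Measurable fun x => A x i j) (i j : n) :
    Measurable fun x => (A x)⁻¹ i j := by
  have hadj : Measurable fun x => (A x).adjugate i j := by
    simp_rw [adjugate_apply]
    refine measurable_det fun k l => ?_
    by_cases hk : k = j <;> simp [updateRow_apply, hk, hA]
  simp_rw [inv_def, Ring.inverse_eq_inv', Matrix.smul_apply, smul_eq_mul]
  exact (measurable_det hA).inv.mul hadj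

omit [DecidableEq n] in
theorem Matrix.measurable_dotProduct_mulVec (hA : ∀ i j, Measurable fun x => A x i j)
    {v : α → n → ℝ} (hv : ∀ i, Measurable fun x => v x i) :
    Measurable fun x => v x ⬝ᵥ (A x *ᵥ v x) := by
  simp only [dotProduct, mulVec]
  fun_prop

end Measurability

theorem abs_integral_sub_integral_le {α : Type*} [MeasurableSpace α] {μ : Measure α}
    [IsProbabilityMeasure μ] {f g : α → ℝ} {B : ℝ} (hf : AEStronglyMeasurable f μ)
    (hg : Integrable g μ) (hfg : ∀ᵐ x ∂μ, |f x - g x| ≤ B) :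
    |(∫ x, f x ∂μ) - ∫ x, g x ∂μ| ≤ B := by
  have hfg' : ∀ᵐ x ∂μ, ‖f x - g x‖ ≤ B := by simpa only [Real.norm_eq_abs] using hfg
  have hf : Integrable f μ := by
    simpa using (Integrable.of_bound (hf.sub hg.aestronglyMeasurable) B hfg').add hg
  rw [← integral_sub hf hg]
  simpa using norm_integral_le_of_norm_le_const hfg'

theorem EuclideanSpace.dotProduct_self_eq_norm_sq {ι : Type*} [Fintype ι]
    (x : EuclideanSpace ℝ ι) : x ⬝ᵥ x = ‖x‖ ^ 2 := by
  rw [← real_inner_self_eq_norm_sq, EuclideanSpace.inner_eq_star_dotProduct]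
  simp

theorem mul_sq_rpow_neg_div_two {a σ : ℝ} (ha : 0 ≤ a) (hσ : 0 < σ) (n : ℕ) :
    (a * σ ^ 2) ^ (-(n : ℝ) / 2) = a ^ (-(n : ℝ) / 2) * σ ^ (-(n : ℝ)) := by
  rw [Real.mul_rpow ha (by positivity), ← Real.rpow_natCast σ 2, ← Real.rpow_mul hσ.le]
  congr 2
  push_cast
  ring

theorem Matrix.PosSemidef.abs_gaussian_sub_isotropic_gaussian_le {n : ℕ} {σ : ℝ} (hσ : 0 < σ)
    {C : Matrix (Fin n) (Fin n) ℝ} (hC : C.PosSemidef) (x : EuclideanSpace ℝ (Fin n)) :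
    |(2 * π) ^ (-(n : ℝ) / 2) * (σ ^ 2 • (1 : Matrix (Fin n) (Fin n) ℝ) + C).det ^ (-(1 : ℝ) / 2) *
          exp (-(1 / 2) * (x ⬝ᵥ ((σ ^ 2 • (1 : Matrix (Fin n) (Fin n) ℝ) + C)⁻¹ *ᵥ x))) -
        (2 * π * σ ^ 2) ^ (-(n : ℝ) / 2) * exp (-(‖x‖ ^ 2) / (2 * σ ^ 2))| ≤
      (2 * π) ^ (-(n : ℝ) / 2) * σ ^ (-(n : ℝ)) * (C.trace / (2 * σ ^ 2)) *
        (1 + ‖x‖ ^ 2 / σ ^ 2) := by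
  have key := hC.abs_det_rpow_mul_exp_sub_le hσ x
  rw [Fintype.card_fin, EuclideanSpace.dotProduct_self_eq_norm_sq] at key
  rw [mul_sq_rpow_neg_div_two (by positivity) hσ, mul_assoc, mul_assoc, ← mul_sub, abs_mul,
    abs_of_pos (by positivity)]
  exact (mul_le_mul_of_nonneg_left key (by positivity)).trans_eq (by ring)

theorem stmt_9_general (d n : ℕ) (σ ε R : ℝ) (hσ : 0 < σ)
    (μ : Measure (Fin d → ℝ)) [IsProbabilityMeasure μ]
    (y : EuclideanSpace ℝ (Fin n))
    (m : (Fin d → ℝ) → EuclideanSpace ℝ (Fin n)) (hm : Measurable m)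
    (C : (Fin d → ℝ) → Matrix (Fin n) (Fin n) ℝ) (hCmeas : ∀ i j, Measurable fun ψ => C ψ i j)
    (hC : ∀ᵐ ψ ∂μ, (C ψ).PosSemidef ∧ (C ψ).trace ≤ n * ε ∧ ‖y - m ψ‖ ≤ R) :
    |(∫ ψ, (2 * Real.pi) ^ (-(n : ℝ) / 2) *
            ((σ ^ 2 • (1 : Matrix (Fin n) (Fin n) ℝ) + C ψ).det) ^ (-(1 : ℝ) / 2) *
            Real.exp (-(1 / 2) *
              ((y - m ψ) ⬝ᵥ ((σ ^ 2 • (1 : Matrix (Fin n) (Fin n) ℝ) + C ψ)⁻¹ *ᵥ (y - m ψ)))) ∂μ) -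
        (∫ ψ, (2 * Real.pi * σ ^ 2) ^ (-(n : ℝ) / 2) *
            Real.exp (-(‖y - m ψ‖ ^ 2) / (2 * σ ^ 2)) ∂μ)| ≤
      (2 * Real.pi) ^ (-(n : ℝ) / 2) * σ ^ (-(n : ℝ)) * (n * ε / (2 * σ ^ 2)) *
        (1 + R ^ 2 / σ ^ 2) := by
  have hA : ∀ i j, Measurable fun ψ => (σ ^ 2 • (1 : Matrix (Fin n) (Fin n) ℝ) + C ψ) i j :=
    fun i j => (hCmeas i j).const_add _
  have hdet := measurable_det hA
  have hquad := measurable_dotProduct_mulVec (measurable_inv_apply hA)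
    (v := fun ψ => (y - m ψ : Fin n → ℝ)) fun i => by fun_prop
  refine abs_integral_sub_integral_le (by fun_prop) ?_ ?_
  · refine Integrable.of_bound (by fun_prop) ((2 * π * σ ^ 2) ^ (-(n : ℝ) / 2))
      (ae_of_all _ fun ψ => ?_)
    rw [norm_mul, Real.norm_of_nonneg (by positivity), Real.norm_of_nonneg (exp_pos _).le]
    exact mul_le_of_le_one_right (by positivity) (exp_le_one_iff.2
      (div_nonpos_of_nonpos_of_nonneg (neg_nonpos.2 (sq_nonneg _)) (by positivity)))
  · filter_upwards [hC] with ψ ⟨hpsd, htr, hR⟩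
    refine (hpsd.abs_gaussian_sub_isotropic_gaussian_le hσ (y - m ψ)).trans ?_
    have hnε : 0 ≤ (n : ℝ) * ε := hpsd.trace_nonneg.trans htr
    gcongr

theorem stmt_9 (d n : ℕ) (hn : 1 ≤ n) (σ ε R : ℝ) (hσ : 0 < σ) (hε : 0 ≤ ε) (hR : 0 ≤ R)
    (μ : Measure (Fin d → ℝ)) [IsProbabilityMeasure μ]
    (y : EuclideanSpace ℝ (Fin n))
    (m : (Fin d → ℝ) → EuclideanSpace ℝ (Fin n)) (hm : Measurable m)
    (C : (Fin d → ℝ) → Matrix (Fin n) (Fin n) ℝ) (hCmeas : ∀ i j, Measurable fun ψ => C ψ i j)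
    (hC : ∀ᵐ ψ ∂μ, (C ψ).PosSemidef ∧ (C ψ).trace ≤ n * ε ∧ ‖y - m ψ‖ ≤ R) :
    |(∫ ψ, (2 * Real.pi) ^ (-(n : ℝ) / 2) *
            ((σ ^ 2 • (1 : Matrix (Fin n) (Fin n) ℝ) + C ψ).det) ^ (-(1 : ℝ) / 2) *
            Real.exp (-(1 / 2) *
              ((y - m ψ) ⬝ᵥ ((σ ^ 2 • (1 : Matrix (Fin n) (Fin n) ℝ) + C ψ)⁻¹ *ᵥ (y - m ψ)))) ∂μ) -
        (∫ ψ, (2 * Real.pi * σ ^ 2) ^ (-(n : ℝ) / 2) *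
            Real.exp (-(‖y - m ψ‖ ^ 2) / (2 * σ ^ 2)) ∂μ)| ≤
      (2 * Real.pi) ^ (-(n : ℝ) / 2) * σ ^ (-(n : ℝ)) * (n * ε / (2 * σ ^ 2)) *
        (1 + R ^ 2 / σ ^ 2) :=
  stmt_9_general d n σ ε R hσ μ y m hm C hCmeas hC
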